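/- Let A be an n×n real matrix with (A+Aᵀ)/2 positive semidefinite. Then det A_{n-1}(1,1)·det A_{n-1}(2,2) ≥ ((det A_{n-1}(1,2) + det A_{n-1}(2,1))/2)², and hence √(det A_{n-1}(1,1)·det A_{n-1}(2,2)) ≥ |(det A_{n-1}(1,2)+det A_{n-1}(2,1))/2|. -/

import Mathlib

/-!
The four minors are, up to a common sign `(-1)^n`, the entries of the adjugate of `A` at
positions `(0,0)`, `(n,n)`, `(0,n)` and `(n,0)`. The quadratic form of `adj A` is nonnegative:
for `A + ε • 1` it equals `det (A + ε • 1) * ⟪z, (A + ε • 1) z⟫` with `z = (A + ε • 1)⁻¹ y`,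
and `ε → 0⁺`. Testing that form on `t • eᵢ + eⱼ` and taking the discriminant gives the
inequality between the entries.
-/

open Matrix

namespace Matrix

variable {ι : Type*} [Fintype ι] [DecidableEq ι]

omit [DecidableEq ι] in
lemma dotProduct_mulVec_nonneg_of_posSemidef_half_add_transpose {A : Matrix ι ι ℝ}
    (hA : ((1 / 2 : ℝ) • (A + Aᵀ)).PosSemidef) (x : ι → ℝ) : 0 ≤ x ⬝ᵥ A *ᵥ x := by
  have hT : x ⬝ᵥ Aᵀ *ᵥ x = x ⬝ᵥ A *ᵥ x := by
    rw [dotProduct_mulVec, vecMul_transpose, dotProduct_comm]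
  have h := hA.dotProduct_mulVec_nonneg x
  rw [star_trivial, smul_mulVec, dotProduct_smul, add_mulVec, dotProduct_add, hT,
    smul_eq_mul] at h
  linarith

/-- Along the segment from `1` to `A` the determinant never vanishes, so it keeps the sign of
`det 1`. -/
lemma det_pos_of_dotProduct_mulVec_pos {A : Matrix ι ι ℝ}
    (hA : ∀ x ≠ 0, 0 < x ⬝ᵥ A *ᵥ x) : 0 < A.det := by
  set g : ℝ → ℝ := fun t => (t • A + (1 - t) • (1 : Matrix ι ι ℝ)).det
  have hg : Continuous g := by fun_prop
  have hne : ∀ t ∈ Set.Icc (0 : ℝ) 1, g t ≠ 0 := by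
    intro t ⟨ht0, ht1⟩ h0
    obtain ⟨v, hv, hv0⟩ := exists_mulVec_eq_zero_iff.mpr h0
    have hvv : 0 < v ⬝ᵥ v := by
      simpa only [star_trivial] using dotProduct_self_star_pos_iff.mpr hv
    have hvAv := hA v hv
    have hquad : v ⬝ᵥ (t • A + (1 - t) • (1 : Matrix ι ι ℝ)) *ᵥ v
        = t * (v ⬝ᵥ A *ᵥ v) + (1 - t) * (v ⬝ᵥ v) := by
      simp only [add_mulVec, smul_mulVec, one_mulVec, dotProduct_add, dotProduct_smul,
        smul_eq_mul]
    rw [hv0, dotProduct_zero] at hquad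
    rcases ht0.eq_or_lt with rfl | ht
    · linarith
    · nlinarith
  by_contra! h
  obtain ⟨t, ht, hgt⟩ := intermediate_value_Icc' zero_le_one hg.continuousOn
    (show (0 : ℝ) ∈ Set.Icc (g 1) (g 0) by simpa [g] using h)
  exact hne t ht hgt

lemma dotProduct_adjugate_mulVec_nonneg_of_pos {A : Matrix ι ι ℝ}
    (hA : ∀ x ≠ 0, 0 < x ⬝ᵥ A *ᵥ x) (y : ι → ℝ) : 0 ≤ y ⬝ᵥ A.adjugate *ᵥ y := by
  have hdet := det_pos_of_dotProduct_mulVec_pos hA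
  obtain ⟨z, rfl⟩ : ∃ z, A *ᵥ z = y :=
    mulVec_surjective_iff_isUnit.mpr ((isUnit_iff_isUnit_det A).mpr hdet.ne'.isUnit) y
  have hadj : A.adjugate *ᵥ (A *ᵥ z) = A.det • z := by
    rw [mulVec_mulVec, adjugate_mul, smul_mulVec, one_mulVec]
  rw [hadj, dotProduct_smul, smul_eq_mul, dotProduct_comm]
  rcases eq_or_ne z 0 with rfl | hz
  · simp
  · exact mul_nonneg hdet.le (hA z hz).le

lemma dotProduct_adjugate_mulVec_nonneg {A : Matrix ι ι ℝ}
    (hA : ∀ x, 0 ≤ x ⬝ᵥ A *ᵥ x) (y : ι → ℝ) : 0 ≤ y ⬝ᵥ A.adjugate *ᵥ y := by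
  set f : ℝ → ℝ := fun ε => y ⬝ᵥ (A + ε • (1 : Matrix ι ι ℝ)).adjugate *ᵥ y
  have hf : Continuous f := by fun_prop
  have hpos : ∀ ε > 0, 0 ≤ f ε := fun ε hε => by
    refine dotProduct_adjugate_mulVec_nonneg_of_pos (fun x hx => ?_) y
    have hxx : 0 < x ⬝ᵥ x := by
      simpa only [star_trivial] using dotProduct_self_star_pos_iff.mpr hx
    rw [add_mulVec, dotProduct_add, smul_mulVec, one_mulVec, dotProduct_smul, smul_eq_mul]
    nlinarith [hA x]
  have hlim : Filter.Tendsto f (nhdsWithin 0 (Set.Ioi 0)) (nhds (f 0)) :=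
    hf.continuousAt.continuousWithinAt
  simpa [f] using ge_of_tendsto hlim (eventually_nhdsWithin_of_forall hpos)

lemma sq_add_div_two_le_mul_of_dotProduct_mulVec_nonneg {M : Matrix ι ι ℝ}
    (hM : ∀ x, 0 ≤ x ⬝ᵥ M *ᵥ x) (i j : ι) :
    ((M i j + M j i) / 2) ^ 2 ≤ M i i * M j j := by
  have hquad (t : ℝ) : 0 ≤ M i i * (t * t) + (M i j + M j i) * t + M j j := by
    have h := hM (t • Pi.single i 1 + Pi.single j 1)
    simp only [mulVec_add, mulVec_smul, mulVec_single_one, add_dotProduct, smul_dotProduct,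
      dotProduct_add, dotProduct_smul, single_dotProduct, smul_eq_mul, col_apply, one_mul] at h
    linarith
  have hd := discrim_le_zero hquad
  rw [discrim] at hd
  nlinarith

lemma sq_det_submatrix_add_div_two_le {n : ℕ} {A : Matrix (Fin (n + 1)) (Fin (n + 1)) ℝ}
    (hA : ∀ x, 0 ≤ x ⬝ᵥ A *ᵥ x) :
    (((A.submatrix Fin.castSucc Fin.succ).det + (A.submatrix Fin.succ Fin.castSucc).det) / 2) ^ 2
      ≤ (A.submatrix Fin.castSucc Fin.castSucc).det * (A.submatrix Fin.succ Fin.succ).det := by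
  cases n with
  | zero => norm_num [det_fin_zero]
  | succ m =>
    have h := sq_add_div_two_le_mul_of_dotProduct_mulVec_nonneg
      (dotProduct_adjugate_mulVec_nonneg hA) 0 (Fin.last (m + 1))
    simp only [adjugate_fin_succ_eq_det_submatrix, Fin.succAbove_zero, Fin.succAbove_last,
      Fin.val_zero, Fin.val_last, add_zero, zero_add, pow_zero, one_mul] at h
    rw [← two_mul, pow_mul, neg_one_sq, one_pow, one_mul] at h
    rcases neg_one_pow_eq_or ℝ (m + 1) with hs | hs <;> rw [hs] at h <;> linear_combination h

end Matrix

theorem stmt_19 (n : ℕ) (A : Matrix (Fin (n + 1)) (Fin (n + 1)) ℝ)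
    (hA : ((1 / 2 : ℝ) • (A + Aᵀ)).PosSemidef) :
    (A.submatrix Fin.castSucc Fin.castSucc).det * (A.submatrix Fin.succ Fin.succ).det ≥
        (((A.submatrix Fin.castSucc Fin.succ).det +
            (A.submatrix Fin.succ Fin.castSucc).det) / 2) ^ 2 ∧
      Real.sqrt ((A.submatrix Fin.castSucc Fin.castSucc).det *
          (A.submatrix Fin.succ Fin.succ).det) ≥
        |((A.submatrix Fin.castSucc Fin.succ).det +
            (A.submatrix Fin.succ Fin.castSucc).det) / 2| := by
  have h := sq_det_submatrix_add_div_two_le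
    (dotProduct_mulVec_nonneg_of_posSemidef_half_add_transpose hA)
  exact ⟨h, Real.abs_le_sqrt h⟩
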